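/- In Z[R_8], the additive subgroup Δ³(R_8) has Z-basis {e_1-e_2+e_3+e_4-e_5+e_6-e_7, e_2-e_3-2e_4+2e_5+e_6-e_7, -e_3-e_4+2e_5-2e_6-e_7, -2e_4, -4e_5-4e_6+4e_7, 8e_6}. -/

import Mathlib

/-- Dihedral quandle operation on `ZMod n`: `a · b = 2b - a`. -/
def dq (n : ℕ) (a b : ZMod n) : ZMod n := 2 * b - a

/-- Quandle ring multiplication on `ℤ[R_n] = ZMod n →₀ ℤ`. -/
noncomputable def qmul (n : ℕ) (x y : ZMod n →₀ ℤ) : ZMod n →₀ ℤ :=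
  x.sum fun a r => y.sum fun b s => Finsupp.single (dq n a b) (r * s)

/-- Augmentation map. -/
noncomputable def aug (n : ℕ) : (ZMod n →₀ ℤ) →ₗ[ℤ] ℤ :=
  Finsupp.lsum ℤ fun _ => LinearMap.id

/-- `e i = a_i - a_0`. -/
noncomputable def e (n : ℕ) (i : ZMod n) : ZMod n →₀ ℤ :=
  Finsupp.single i 1 - Finsupp.single 0 1

/-- Augmentation ideal. -/
noncomputable def Δ (n : ℕ) : Submodule ℤ (ZMod n →₀ ℤ) := LinearMap.ker (aug n)

noncomputable def Δ2 (n : ℕ) : Submodule ℤ (ZMod n →₀ ℤ) :=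
  Submodule.span ℤ {z | ∃ x ∈ Δ n, ∃ y ∈ Δ n, z = qmul n x y}

noncomputable def Δ3 (n : ℕ) : Submodule ℤ (ZMod n →₀ ℤ) :=
  Submodule.span ℤ {z | ∃ x ∈ Δ2 n, ∃ y ∈ Δ n, z = qmul n x y}

-- bilinearity
lemma qmul_add_left (n : ℕ) (x x' y : ZMod n →₀ ℤ) :
    qmul n (x + x') y = qmul n x y + qmul n x' y := by
  unfold qmul
  apply Finsupp.sum_add_index' <;> intros <;>
    simp [add_mul, Finsupp.single_add, Finsupp.sum_add]

lemma qmul_smul_left (n : ℕ) (c : ℤ) (x y : ZMod n →₀ ℤ) :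
    qmul n (c • x) y = c • qmul n x y := by
  unfold qmul
  rw [Finsupp.sum_smul_index (fun i => by simp)]
  rw [Finsupp.smul_sum]
  refine Finsupp.sum_congr fun a _ => ?_
  rw [Finsupp.smul_sum]
  refine Finsupp.sum_congr fun b _ => ?_
  rw [Finsupp.smul_single, smul_eq_mul, mul_assoc]

lemma qmul_add_right (n : ℕ) (x y y' : ZMod n →₀ ℤ) :
    qmul n x (y + y') = qmul n x y + qmul n x y' := by
  unfold qmul
  rw [← Finsupp.sum_add]
  refine Finsupp.sum_congr fun a _ => ?_
  apply Finsupp.sum_add_index' <;> intros <;>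
    simp [mul_add, Finsupp.single_add]

lemma qmul_smul_right (n : ℕ) (c : ℤ) (x y : ZMod n →₀ ℤ) :
    qmul n x (c • y) = c • qmul n x y := by
  unfold qmul
  rw [Finsupp.smul_sum]
  refine Finsupp.sum_congr fun a _ => ?_
  rw [Finsupp.sum_smul_index (fun i => by simp)]
  rw [Finsupp.smul_sum]
  refine Finsupp.sum_congr fun b _ => ?_
  rw [Finsupp.smul_single, smul_eq_mul, mul_left_comm]

noncomputable def Bq (n : ℕ) : (ZMod n →₀ ℤ) →ₗ[ℤ] (ZMod n →₀ ℤ) →ₗ[ℤ] (ZMod n →₀ ℤ) :=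
  LinearMap.mk₂ ℤ (qmul n) (qmul_add_left n) (qmul_smul_left n)
    (qmul_add_right n) (qmul_smul_right n)

lemma qmul_single (n : ℕ) (a b : ZMod n) (r s : ℤ) :
    qmul n (Finsupp.single a r) (Finsupp.single b s) = Finsupp.single (dq n a b) (r * s) := by
  unfold qmul
  rw [Finsupp.sum_single_index (by simp), Finsupp.sum_single_index (by simp)]

lemma aug_apply (n : ℕ) (x : ZMod n →₀ ℤ) : aug n x = ∑ i ∈ x.support, x i := by
  simp [aug, Finsupp.lsum_apply, Finsupp.sum]

lemma e_mem_Δ (n : ℕ) (i : ZMod n) : e n i ∈ Δ n := by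
  rw [Δ, LinearMap.mem_ker, e, map_sub]
  simp [aug]

lemma Δ_eq_span (n : ℕ) : Δ n = Submodule.span ℤ (Set.range (e n)) := by
  refine le_antisymm ?_ ?_
  · intro x hx
    have hx0 : ∑ i ∈ x.support, x i = 0 := by
      rw [← aug_apply]; exact hx
    have hrep : x = ∑ i ∈ x.support, (x i) • e n i := by
      simp only [e, smul_sub]
      rw [Finset.sum_sub_distrib, ← Finset.sum_smul, hx0, zero_smul, sub_zero]
      conv_lhs => rw [← Finsupp.sum_single x]
      rw [Finsupp.sum]
      refine Finset.sum_congr rfl fun i _ => ?_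
      rw [Finsupp.smul_single, smul_eq_mul, mul_one]
    rw [hrep]
    exact Submodule.sum_mem _ fun i _ =>
      Submodule.smul_mem _ _ (Submodule.subset_span ⟨i, rfl⟩)
  · rw [Submodule.span_le]
    rintro _ ⟨i, rfl⟩
    exact e_mem_Δ n i


lemma Δ2_eq_map₂ (n : ℕ) : Δ2 n = Submodule.map₂ (Bq n) (Δ n) (Δ n) := by
  rw [Submodule.map₂_eq_span_image2, Δ2]
  congr 1
  ext z
  simp only [Set.mem_setOf_eq, Set.mem_image2, SetLike.mem_coe]
  constructor
  · rintro ⟨x, hx, y, hy, rfl⟩; exact ⟨x, hx, y, hy, rfl⟩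
  · rintro ⟨x, hx, y, hy, rfl⟩; exact ⟨x, hx, y, hy, rfl⟩

lemma Δ3_eq_map₂ (n : ℕ) : Δ3 n = Submodule.map₂ (Bq n) (Δ2 n) (Δ n) := by
  rw [Submodule.map₂_eq_span_image2, Δ3]
  congr 1
  ext z
  simp only [Set.mem_setOf_eq, Set.mem_image2, SetLike.mem_coe]
  constructor
  · rintro ⟨x, hx, y, hy, rfl⟩; exact ⟨x, hx, y, hy, rfl⟩
  · rintro ⟨x, hx, y, hy, rfl⟩; exact ⟨x, hx, y, hy, rfl⟩

lemma Δ3_eq_span (n : ℕ) : Δ3 n =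
    Submodule.span ℤ (Set.image2 (fun x y => qmul n x y)
      (Set.image2 (fun x y => qmul n x y) (Set.range (e n)) (Set.range (e n)))
      (Set.range (e n))) := by
  rw [Δ3_eq_map₂, Δ2_eq_map₂, Δ_eq_span, Submodule.map₂_span_span,
    Submodule.map₂_span_span]
  rfl

noncomputable def s8 (a : ZMod 8) : ZMod 8 →₀ ℤ := Finsupp.single a 1

lemma dq8 (a b : ZMod 8) : dq 8 a b = 2 * b - a := rfl

lemma qmul_s8 (a b : ZMod 8) : qmul 8 (s8 a) (s8 b) = s8 (2 * b - a) := by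
  rw [s8, s8, qmul_single, mul_one, dq8, s8]

lemma qmul_sub_left (n : ℕ) (x y z : ZMod n →₀ ℤ) :
    qmul n (x - y) z = qmul n x z - qmul n y z := by
  have h : Bq n (x - y) z = (Bq n x - Bq n y) z := by rw [map_sub]
  rw [LinearMap.sub_apply] at h
  exact h

lemma qmul_sub_right (n : ℕ) (x y z : ZMod n →₀ ℤ) :
    qmul n x (y - z) = qmul n x y - qmul n x z := map_sub (Bq n x) y z

lemma e_eq (i : ZMod 8) : e 8 i = s8 i - s8 0 := rfl

lemma qmul_e_e (i j : ZMod 8) : qmul 8 (e 8 i) (e 8 j) =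
    s8 (2 * j - i) - s8 (2 * j) - s8 (-i) + s8 0 := by
  rw [e_eq, e_eq, qmul_sub_left, qmul_sub_right, qmul_sub_right,
    qmul_s8, qmul_s8, qmul_s8, qmul_s8]
  simp only [mul_zero, zero_sub, sub_zero]
  abel

lemma P_expand (i j k : ZMod 8) : qmul 8 (qmul 8 (e 8 i) (e 8 j)) (e 8 k) =
    s8 (2 * k - (2 * j - i)) - s8 (2 * k - 2 * j) - s8 (2 * k - (-i)) + s8 (2 * k)
      - s8 (-(2 * j - i)) + s8 (-(2 * j)) + s8 (- (-i)) - s8 0 := by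
  rw [qmul_e_e, e_eq]
  simp only [qmul_sub_right, qmul_add_left, qmul_sub_left, qmul_s8, mul_zero, zero_sub, sub_zero]
  abel

def ctab : List (List (List (List Int))) := [
 [
  [[0, 0, 0, 0, 0, 0], [0, 0, 0, 0, 0, 0], [0, 0, 0, 0, 0, 0], [0, 0, 0, 0, 0, 0], [0, 0, 0, 0, 0, 0], [0, 0, 0, 0, 0, 0], [0, 0, 0, 0, 0, 0], [0, 0, 0, 0, 0, 0]],
  [[0, 0, 0, 0, 0, 0], [0, 0, 0, 0, 0, 0], [0, 0, 0, 0, 0, 0], [0, 0, 0, 0, 0, 0], [0, 0, 0, 0, 0, 0], [0, 0, 0, 0, 0, 0], [0, 0, 0, 0, 0, 0], [0, 0, 0, 0, 0, 0]],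
  [[0, 0, 0, 0, 0, 0], [0, 0, 0, 0, 0, 0], [0, 0, 0, 0, 0, 0], [0, 0, 0, 0, 0, 0], [0, 0, 0, 0, 0, 0], [0, 0, 0, 0, 0, 0], [0, 0, 0, 0, 0, 0], [0, 0, 0, 0, 0, 0]],
  [[0, 0, 0, 0, 0, 0], [0, 0, 0, 0, 0, 0], [0, 0, 0, 0, 0, 0], [0, 0, 0, 0, 0, 0], [0, 0, 0, 0, 0, 0], [0, 0, 0, 0, 0, 0], [0, 0, 0, 0, 0, 0], [0, 0, 0, 0, 0, 0]],
  [[0, 0, 0, 0, 0, 0], [0, 0, 0, 0, 0, 0], [0, 0, 0, 0, 0, 0], [0, 0, 0, 0, 0, 0], [0, 0, 0, 0, 0, 0], [0, 0, 0, 0, 0, 0], [0, 0, 0, 0, 0, 0], [0, 0, 0, 0, 0, 0]],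
  [[0, 0, 0, 0, 0, 0], [0, 0, 0, 0, 0, 0], [0, 0, 0, 0, 0, 0], [0, 0, 0, 0, 0, 0], [0, 0, 0, 0, 0, 0], [0, 0, 0, 0, 0, 0], [0, 0, 0, 0, 0, 0], [0, 0, 0, 0, 0, 0]],
  [[0, 0, 0, 0, 0, 0], [0, 0, 0, 0, 0, 0], [0, 0, 0, 0, 0, 0], [0, 0, 0, 0, 0, 0], [0, 0, 0, 0, 0, 0], [0, 0, 0, 0, 0, 0], [0, 0, 0, 0, 0, 0], [0, 0, 0, 0, 0, 0]],
  [[0, 0, 0, 0, 0, 0], [0, 0, 0, 0, 0, 0], [0, 0, 0, 0, 0, 0], [0, 0, 0, 0, 0, 0], [0, 0, 0, 0, 0, 0], [0, 0, 0, 0, 0, 0], [0, 0, 0, 0, 0, 0], [0, 0, 0, 0, 0, 0]]],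
 [
  [[0, 0, 0, 0, 0, 0], [0, 0, 0, 0, 0, 0], [0, 0, 0, 0, 0, 0], [0, 0, 0, 0, 0, 0], [0, 0, 0, 0, 0, 0], [0, 0, 0, 0, 0, 0], [0, 0, 0, 0, 0, 0], [0, 0, 0, 0, 0, 0]],
  [[0, 0, 0, 0, 0, 0], [2, 3, 0, -2, 1, 0], [1, 0, 0, 0, 0, 0], [1, 1, 0, 0, 0, 0], [0, 0, 0, 0, 0, 0], [2, 3, 0, -2, 1, 0], [1, 0, 0, 0, 0, 0], [1, 1, 0, 0, 0, 0]],
  [[0, 0, 0, 0, 0, 0], [1, 2, 0, -2, 1, 0], [2, 2, 0, -2, 1, 0], [1, 0, 0, 0, 0, 0], [0, 0, 0, 0, 0, 0], [1, 2, 0, -2, 1, 0], [2, 2, 0, -2, 1, 0], [1, 0, 0, 0, 0, 0]],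
  [[0, 0, 0, 0, 0, 0], [1, 3, 0, -2, 1, 0], [1, 2, 0, -2, 1, 0], [2, 3, 0, -2, 1, 0], [0, 0, 0, 0, 0, 0], [1, 3, 0, -2, 1, 0], [1, 2, 0, -2, 1, 0], [2, 3, 0, -2, 1, 0]],
  [[0, 0, 0, 0, 0, 0], [0, 0, 0, 0, 0, 0], [0, 0, 0, 0, 0, 0], [0, 0, 0, 0, 0, 0], [0, 0, 0, 0, 0, 0], [0, 0, 0, 0, 0, 0], [0, 0, 0, 0, 0, 0], [0, 0, 0, 0, 0, 0]],
  [[0, 0, 0, 0, 0, 0], [2, 3, 0, -2, 1, 0], [1, 0, 0, 0, 0, 0], [1, 1, 0, 0, 0, 0], [0, 0, 0, 0, 0, 0], [2, 3, 0, -2, 1, 0], [1, 0, 0, 0, 0, 0], [1, 1, 0, 0, 0, 0]],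
  [[0, 0, 0, 0, 0, 0], [1, 2, 0, -2, 1, 0], [2, 2, 0, -2, 1, 0], [1, 0, 0, 0, 0, 0], [0, 0, 0, 0, 0, 0], [1, 2, 0, -2, 1, 0], [2, 2, 0, -2, 1, 0], [1, 0, 0, 0, 0, 0]],
  [[0, 0, 0, 0, 0, 0], [1, 3, 0, -2, 1, 0], [1, 2, 0, -2, 1, 0], [2, 3, 0, -2, 1, 0], [0, 0, 0, 0, 0, 0], [1, 3, 0, -2, 1, 0], [1, 2, 0, -2, 1, 0], [2, 3, 0, -2, 1, 0]]],
 [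
  [[0, 0, 0, 0, 0, 0], [0, 0, 0, 0, 0, 0], [0, 0, 0, 0, 0, 0], [0, 0, 0, 0, 0, 0], [0, 0, 0, 0, 0, 0], [0, 0, 0, 0, 0, 0], [0, 0, 0, 0, 0, 0], [0, 0, 0, 0, 0, 0]],
  [[0, 0, 0, 0, 0, 0], [0, 3, -3, -1, 0, -1], [0, 0, 0, -1, 0, 0], [0, 1, -1, 0, 0, 0], [0, 0, 0, 0, 0, 0], [0, 3, -3, -1, 0, -1], [0, 0, 0, -1, 0, 0], [0, 1, -1, 0, 0, 0]],
  [[0, 0, 0, 0, 0, 0], [0, 2, -2, -1, 0, -1], [0, 2, -2, -2, 0, -1], [0, 0, 0, -1, 0, 0], [0, 0, 0, 0, 0, 0], [0, 2, -2, -1, 0, -1], [0, 2, -2, -2, 0, -1], [0, 0, 0, -1, 0, 0]],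
  [[0, 0, 0, 0, 0, 0], [0, 3, -3, 0, 0, -1], [0, 2, -2, -1, 0, -1], [0, 3, -3, -1, 0, -1], [0, 0, 0, 0, 0, 0], [0, 3, -3, 0, 0, -1], [0, 2, -2, -1, 0, -1], [0, 3, -3, -1, 0, -1]],
  [[0, 0, 0, 0, 0, 0], [0, 0, 0, 0, 0, 0], [0, 0, 0, 0, 0, 0], [0, 0, 0, 0, 0, 0], [0, 0, 0, 0, 0, 0], [0, 0, 0, 0, 0, 0], [0, 0, 0, 0, 0, 0], [0, 0, 0, 0, 0, 0]],
  [[0, 0, 0, 0, 0, 0], [0, 3, -3, -1, 0, -1], [0, 0, 0, -1, 0, 0], [0, 1, -1, 0, 0, 0], [0, 0, 0, 0, 0, 0], [0, 3, -3, -1, 0, -1], [0, 0, 0, -1, 0, 0], [0, 1, -1, 0, 0, 0]],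
  [[0, 0, 0, 0, 0, 0], [0, 2, -2, -1, 0, -1], [0, 2, -2, -2, 0, -1], [0, 0, 0, -1, 0, 0], [0, 0, 0, 0, 0, 0], [0, 2, -2, -1, 0, -1], [0, 2, -2, -2, 0, -1], [0, 0, 0, -1, 0, 0]],
  [[0, 0, 0, 0, 0, 0], [0, 3, -3, 0, 0, -1], [0, 2, -2, -1, 0, -1], [0, 3, -3, -1, 0, -1], [0, 0, 0, 0, 0, 0], [0, 3, -3, 0, 0, -1], [0, 2, -2, -1, 0, -1], [0, 3, -3, -1, 0, -1]]],
 [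
  [[0, 0, 0, 0, 0, 0], [0, 0, 0, 0, 0, 0], [0, 0, 0, 0, 0, 0], [0, 0, 0, 0, 0, 0], [0, 0, 0, 0, 0, 0], [0, 0, 0, 0, 0, 0], [0, 0, 0, 0, 0, 0], [0, 0, 0, 0, 0, 0]],
  [[0, 0, 0, 0, 0, 0], [-1, 0, -3, 1, -1, -1], [-1, -2, 0, 1, -1, 0], [-2, -2, -1, 2, -1, 0], [0, 0, 0, 0, 0, 0], [-1, 0, -3, 1, -1, -1], [-1, -2, 0, 1, -1, 0], [-2, -2, -1, 2, -1, 0]],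
  [[0, 0, 0, 0, 0, 0], [1, 2, -2, -1, 0, -1], [0, 0, -2, 0, -1, -1], [-1, -2, 0, 1, -1, 0], [0, 0, 0, 0, 0, 0], [1, 2, -2, -1, 0, -1], [0, 0, -2, 0, -1, -1], [-1, -2, 0, 1, -1, 0]],
  [[0, 0, 0, 0, 0, 0], [0, 2, -3, 0, 0, -1], [1, 2, -2, -1, 0, -1], [-1, 0, -3, 1, -1, -1], [0, 0, 0, 0, 0, 0], [0, 2, -3, 0, 0, -1], [1, 2, -2, -1, 0, -1], [-1, 0, -3, 1, -1, -1]],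
  [[0, 0, 0, 0, 0, 0], [0, 0, 0, 0, 0, 0], [0, 0, 0, 0, 0, 0], [0, 0, 0, 0, 0, 0], [0, 0, 0, 0, 0, 0], [0, 0, 0, 0, 0, 0], [0, 0, 0, 0, 0, 0], [0, 0, 0, 0, 0, 0]],
  [[0, 0, 0, 0, 0, 0], [-1, 0, -3, 1, -1, -1], [-1, -2, 0, 1, -1, 0], [-2, -2, -1, 2, -1, 0], [0, 0, 0, 0, 0, 0], [-1, 0, -3, 1, -1, -1], [-1, -2, 0, 1, -1, 0], [-2, -2, -1, 2, -1, 0]],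
  [[0, 0, 0, 0, 0, 0], [1, 2, -2, -1, 0, -1], [0, 0, -2, 0, -1, -1], [-1, -2, 0, 1, -1, 0], [0, 0, 0, 0, 0, 0], [1, 2, -2, -1, 0, -1], [0, 0, -2, 0, -1, -1], [-1, -2, 0, 1, -1, 0]],
  [[0, 0, 0, 0, 0, 0], [0, 2, -3, 0, 0, -1], [1, 2, -2, -1, 0, -1], [-1, 0, -3, 1, -1, -1], [0, 0, 0, 0, 0, 0], [0, 2, -3, 0, 0, -1], [1, 2, -2, -1, 0, -1], [-1, 0, -3, 1, -1, -1]]],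
 [
  [[0, 0, 0, 0, 0, 0], [0, 0, 0, 0, 0, 0], [0, 0, 0, 0, 0, 0], [0, 0, 0, 0, 0, 0], [0, 0, 0, 0, 0, 0], [0, 0, 0, 0, 0, 0], [0, 0, 0, 0, 0, 0], [0, 0, 0, 0, 0, 0]],
  [[0, 0, 0, 0, 0, 0], [0, 0, 0, -1, 0, 0], [0, -2, 2, 0, 0, 1], [0, -2, 2, 1, 0, 1], [0, 0, 0, 0, 0, 0], [0, 0, 0, -1, 0, 0], [0, -2, 2, 0, 0, 1], [0, -2, 2, 1, 0, 1]],
  [[0, 0, 0, 0, 0, 0], [0, 2, -2, -2, 0, -1], [0, 0, 0, -2, 0, 0], [0, -2, 2, 0, 0, 1], [0, 0, 0, 0, 0, 0], [0, 2, -2, -2, 0, -1], [0, 0, 0, -2, 0, 0], [0, -2, 2, 0, 0, 1]],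
  [[0, 0, 0, 0, 0, 0], [0, 2, -2, -1, 0, -1], [0, 2, -2, -2, 0, -1], [0, 0, 0, -1, 0, 0], [0, 0, 0, 0, 0, 0], [0, 2, -2, -1, 0, -1], [0, 2, -2, -2, 0, -1], [0, 0, 0, -1, 0, 0]],
  [[0, 0, 0, 0, 0, 0], [0, 0, 0, 0, 0, 0], [0, 0, 0, 0, 0, 0], [0, 0, 0, 0, 0, 0], [0, 0, 0, 0, 0, 0], [0, 0, 0, 0, 0, 0], [0, 0, 0, 0, 0, 0], [0, 0, 0, 0, 0, 0]],
  [[0, 0, 0, 0, 0, 0], [0, 0, 0, -1, 0, 0], [0, -2, 2, 0, 0, 1], [0, -2, 2, 1, 0, 1], [0, 0, 0, 0, 0, 0], [0, 0, 0, -1, 0, 0], [0, -2, 2, 0, 0, 1], [0, -2, 2, 1, 0, 1]],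
  [[0, 0, 0, 0, 0, 0], [0, 2, -2, -2, 0, -1], [0, 0, 0, -2, 0, 0], [0, -2, 2, 0, 0, 1], [0, 0, 0, 0, 0, 0], [0, 2, -2, -2, 0, -1], [0, 0, 0, -2, 0, 0], [0, -2, 2, 0, 0, 1]],
  [[0, 0, 0, 0, 0, 0], [0, 2, -2, -1, 0, -1], [0, 2, -2, -2, 0, -1], [0, 0, 0, -1, 0, 0], [0, 0, 0, 0, 0, 0], [0, 2, -2, -1, 0, -1], [0, 2, -2, -2, 0, -1], [0, 0, 0, -1, 0, 0]]],
 [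
  [[0, 0, 0, 0, 0, 0], [0, 0, 0, 0, 0, 0], [0, 0, 0, 0, 0, 0], [0, 0, 0, 0, 0, 0], [0, 0, 0, 0, 0, 0], [0, 0, 0, 0, 0, 0], [0, 0, 0, 0, 0, 0], [0, 0, 0, 0, 0, 0]],
  [[0, 0, 0, 0, 0, 0], [0, 1, 0, -1, 0, 0], [-1, -2, 2, 0, 0, 1], [1, 1, 2, -1, 1, 1], [0, 0, 0, 0, 0, 0], [0, 1, 0, -1, 0, 0], [-1, -2, 2, 0, 0, 1], [1, 1, 2, -1, 1, 1]],
  [[0, 0, 0, 0, 0, 0], [-1, 0, -2, 0, -1, -1], [-2, -2, 0, 0, -1, 0], [-1, -2, 2, 0, 0, 1], [0, 0, 0, 0, 0, 0], [-1, 0, -2, 0, -1, -1], [-2, -2, 0, 0, -1, 0], [-1, -2, 2, 0, 0, 1]],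
  [[0, 0, 0, 0, 0, 0], [1, 3, -2, -1, 0, -1], [-1, 0, -2, 0, -1, -1], [0, 1, 0, -1, 0, 0], [0, 0, 0, 0, 0, 0], [1, 3, -2, -1, 0, -1], [-1, 0, -2, 0, -1, -1], [0, 1, 0, -1, 0, 0]],
  [[0, 0, 0, 0, 0, 0], [0, 0, 0, 0, 0, 0], [0, 0, 0, 0, 0, 0], [0, 0, 0, 0, 0, 0], [0, 0, 0, 0, 0, 0], [0, 0, 0, 0, 0, 0], [0, 0, 0, 0, 0, 0], [0, 0, 0, 0, 0, 0]],
  [[0, 0, 0, 0, 0, 0], [0, 1, 0, -1, 0, 0], [-1, -2, 2, 0, 0, 1], [1, 1, 2, -1, 1, 1], [0, 0, 0, 0, 0, 0], [0, 1, 0, -1, 0, 0], [-1, -2, 2, 0, 0, 1], [1, 1, 2, -1, 1, 1]],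
  [[0, 0, 0, 0, 0, 0], [-1, 0, -2, 0, -1, -1], [-2, -2, 0, 0, -1, 0], [-1, -2, 2, 0, 0, 1], [0, 0, 0, 0, 0, 0], [-1, 0, -2, 0, -1, -1], [-2, -2, 0, 0, -1, 0], [-1, -2, 2, 0, 0, 1]],
  [[0, 0, 0, 0, 0, 0], [1, 3, -2, -1, 0, -1], [-1, 0, -2, 0, -1, -1], [0, 1, 0, -1, 0, 0], [0, 0, 0, 0, 0, 0], [1, 3, -2, -1, 0, -1], [-1, 0, -2, 0, -1, -1], [0, 1, 0, -1, 0, 0]]],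
 [
  [[0, 0, 0, 0, 0, 0], [0, 0, 0, 0, 0, 0], [0, 0, 0, 0, 0, 0], [0, 0, 0, 0, 0, 0], [0, 0, 0, 0, 0, 0], [0, 0, 0, 0, 0, 0], [0, 0, 0, 0, 0, 0], [0, 0, 0, 0, 0, 0]],
  [[0, 0, 0, 0, 0, 0], [0, 1, -1, 0, 0, 0], [0, -2, 2, 1, 0, 1], [0, 1, -1, 1, 0, 0], [0, 0, 0, 0, 0, 0], [0, 1, -1, 0, 0, 0], [0, -2, 2, 1, 0, 1], [0, 1, -1, 1, 0, 0]],
  [[0, 0, 0, 0, 0, 0], [0, 0, 0, -1, 0, 0], [0, -2, 2, 0, 0, 1], [0, -2, 2, 1, 0, 1], [0, 0, 0, 0, 0, 0], [0, 0, 0, -1, 0, 0], [0, -2, 2, 0, 0, 1], [0, -2, 2, 1, 0, 1]],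
  [[0, 0, 0, 0, 0, 0], [0, 3, -3, -1, 0, -1], [0, 0, 0, -1, 0, 0], [0, 1, -1, 0, 0, 0], [0, 0, 0, 0, 0, 0], [0, 3, -3, -1, 0, -1], [0, 0, 0, -1, 0, 0], [0, 1, -1, 0, 0, 0]],
  [[0, 0, 0, 0, 0, 0], [0, 0, 0, 0, 0, 0], [0, 0, 0, 0, 0, 0], [0, 0, 0, 0, 0, 0], [0, 0, 0, 0, 0, 0], [0, 0, 0, 0, 0, 0], [0, 0, 0, 0, 0, 0], [0, 0, 0, 0, 0, 0]],
  [[0, 0, 0, 0, 0, 0], [0, 1, -1, 0, 0, 0], [0, -2, 2, 1, 0, 1], [0, 1, -1, 1, 0, 0], [0, 0, 0, 0, 0, 0], [0, 1, -1, 0, 0, 0], [0, -2, 2, 1, 0, 1], [0, 1, -1, 1, 0, 0]],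
  [[0, 0, 0, 0, 0, 0], [0, 0, 0, -1, 0, 0], [0, -2, 2, 0, 0, 1], [0, -2, 2, 1, 0, 1], [0, 0, 0, 0, 0, 0], [0, 0, 0, -1, 0, 0], [0, -2, 2, 0, 0, 1], [0, -2, 2, 1, 0, 1]],
  [[0, 0, 0, 0, 0, 0], [0, 3, -3, -1, 0, -1], [0, 0, 0, -1, 0, 0], [0, 1, -1, 0, 0, 0], [0, 0, 0, 0, 0, 0], [0, 3, -3, -1, 0, -1], [0, 0, 0, -1, 0, 0], [0, 1, -1, 0, 0, 0]]],
 [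
  [[0, 0, 0, 0, 0, 0], [0, 0, 0, 0, 0, 0], [0, 0, 0, 0, 0, 0], [0, 0, 0, 0, 0, 0], [0, 0, 0, 0, 0, 0], [0, 0, 0, 0, 0, 0], [0, 0, 0, 0, 0, 0], [0, 0, 0, 0, 0, 0]],
  [[0, 0, 0, 0, 0, 0], [-1, 0, -1, 0, 0, 0], [1, 0, 2, -1, 1, 1], [0, 0, -1, 1, 0, 0], [0, 0, 0, 0, 0, 0], [-1, 0, -1, 0, 0, 0], [1, 0, 2, -1, 1, 1], [0, 0, -1, 1, 0, 0]],
  [[0, 0, 0, 0, 0, 0], [-1, 0, 0, -1, 0, 0], [0, 0, 2, -2, 1, 1], [1, 0, 2, -1, 1, 1], [0, 0, 0, 0, 0, 0], [-1, 0, 0, -1, 0, 0], [0, 0, 2, -2, 1, 1], [1, 0, 2, -1, 1, 1]],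
  [[0, 0, 0, 0, 0, 0], [-2, 0, -3, 1, -1, -1], [-1, 0, 0, -1, 0, 0], [-1, 0, -1, 0, 0, 0], [0, 0, 0, 0, 0, 0], [-2, 0, -3, 1, -1, -1], [-1, 0, 0, -1, 0, 0], [-1, 0, -1, 0, 0, 0]],
  [[0, 0, 0, 0, 0, 0], [0, 0, 0, 0, 0, 0], [0, 0, 0, 0, 0, 0], [0, 0, 0, 0, 0, 0], [0, 0, 0, 0, 0, 0], [0, 0, 0, 0, 0, 0], [0, 0, 0, 0, 0, 0], [0, 0, 0, 0, 0, 0]],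
  [[0, 0, 0, 0, 0, 0], [-1, 0, -1, 0, 0, 0], [1, 0, 2, -1, 1, 1], [0, 0, -1, 1, 0, 0], [0, 0, 0, 0, 0, 0], [-1, 0, -1, 0, 0, 0], [1, 0, 2, -1, 1, 1], [0, 0, -1, 1, 0, 0]],
  [[0, 0, 0, 0, 0, 0], [-1, 0, 0, -1, 0, 0], [0, 0, 2, -2, 1, 1], [1, 0, 2, -1, 1, 1], [0, 0, 0, 0, 0, 0], [-1, 0, 0, -1, 0, 0], [0, 0, 2, -2, 1, 1], [1, 0, 2, -1, 1, 1]],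
  [[0, 0, 0, 0, 0, 0], [-2, 0, -3, 1, -1, -1], [-1, 0, 0, -1, 0, 0], [-1, 0, -1, 0, 0, 0], [0, 0, 0, 0, 0, 0], [-2, 0, -3, 1, -1, -1], [-1, 0, 0, -1, 0, 0], [-1, 0, -1, 0, 0, 0]]]]

def cf (i j k : ZMod 8) (t : Fin 6) : ℤ :=
  ((((ctab.getD i.val []).getD j.val []).getD k.val []).getD t.val 0)

noncomputable def v : Fin 6 → (ZMod 8 →₀ ℤ) :=
  ![e 8 1 - e 8 2 + e 8 3 + e 8 4 - e 8 5 + e 8 6 - e 8 7,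
    e 8 2 - e 8 3 - (2 : ℤ) • e 8 4 + (2 : ℤ) • e 8 5 + e 8 6 - e 8 7,
    -e 8 3 - e 8 4 + (2 : ℤ) • e 8 5 - (2 : ℤ) • e 8 6 - e 8 7,
    -(2 : ℤ) • e 8 4,
    -(4 : ℤ) • e 8 5 - (4 : ℤ) • e 8 6 + (4 : ℤ) • e 8 7,
    (8 : ℤ) • e 8 6]

lemma v0 : v 0 = e 8 1 - e 8 2 + e 8 3 + e 8 4 - e 8 5 + e 8 6 - e 8 7 := rfl
lemma v1 : v 1 = e 8 2 - e 8 3 - (2 : ℤ) • e 8 4 + (2 : ℤ) • e 8 5 + e 8 6 - e 8 7 := rfl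
lemma v2 : v 2 = -e 8 3 - e 8 4 + (2 : ℤ) • e 8 5 - (2 : ℤ) • e 8 6 - e 8 7 := rfl
lemma v3 : v 3 = -(2 : ℤ) • e 8 4 := rfl
lemma v4 : v 4 = -(4 : ℤ) • e 8 5 - (4 : ℤ) • e 8 6 + (4 : ℤ) • e 8 7 := rfl
lemma v5 : v 5 = (8 : ℤ) • e 8 6 := rfl


set_option maxRecDepth 10000 in
lemma key : ∀ i j k a : ZMod 8,
    ((((((((if 2 * k - (2 * j - i) = a then (1:ℤ) else 0) - if 2 * k - 2 * j = a then 1 else 0) -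
                if 2 * k - -i = a then 1 else 0) +
              if 2 * k = a then 1 else 0) -
            if -(2 * j - i) = a then 1 else 0) +
          if -(2 * j) = a then 1 else 0) +
        if - -i = a then 1 else 0) -
      if 0 = a then 1 else 0) =
    cf i j k 0 *
                (((if 1 = a then 1 else 0) - if 0 = a then 1 else 0) -
                            ((if 2 = a then 1 else 0) - if 0 = a then 1 else 0) +
                          ((if 3 = a then 1 else 0) - if 0 = a then 1 else 0) +
                        ((if 4 = a then 1 else 0) - if 0 = a then 1 else 0) -
                      ((if 5 = a then 1 else 0) - if 0 = a then 1 else 0) +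
                    ((if 6 = a then 1 else 0) - if 0 = a then 1 else 0) -
                  ((if 7 = a then 1 else 0) - if 0 = a then 1 else 0)) +
              cf i j k 1 *
                (((if 2 = a then 1 else 0) - if 0 = a then 1 else 0) -
                          ((if 3 = a then 1 else 0) - if 0 = a then 1 else 0) -
                        2 * ((if 4 = a then 1 else 0) - if 0 = a then 1 else 0) +
                      2 * ((if 5 = a then 1 else 0) - if 0 = a then 1 else 0) +
                    ((if 6 = a then 1 else 0) - if 0 = a then 1 else 0) -
                  ((if 7 = a then 1 else 0) - if 0 = a then 1 else 0)) +
            cf i j k 2 *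
              (-((if 3 = a then 1 else 0) - if 0 = a then 1 else 0) -
                      ((if 4 = a then 1 else 0) - if 0 = a then 1 else 0) +
                    2 * ((if 5 = a then 1 else 0) - if 0 = a then 1 else 0) -
                  2 * ((if 6 = a then 1 else 0) - if 0 = a then 1 else 0) -
                ((if 7 = a then 1 else 0) - if 0 = a then 1 else 0)) +
          cf i j k 3 * (-2 * ((if 4 = a then 1 else 0) - if 0 = a then 1 else 0)) +
        cf i j k 4 *
          (-4 * ((if 5 = a then 1 else 0) - if 0 = a then 1 else 0) -
              4 * ((if 6 = a then 1 else 0) - if 0 = a then 1 else 0) +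
            4 * ((if 7 = a then 1 else 0) - if 0 = a then 1 else 0)) +
      cf i j k 5 * (8 * ((if 6 = a then 1 else 0) - if 0 = a then 1 else 0)) := by
  decide

lemma master (i j k : ZMod 8) : qmul 8 (qmul 8 (e 8 i) (e 8 j)) (e 8 k) =
    ∑ t : Fin 6, cf i j k t • v t := by
  rw [P_expand, Fin.sum_univ_six, v0, v1, v2, v3, v4, v5]
  ext a
  simp only [e_eq, s8, Finsupp.coe_add, Finsupp.coe_sub, Finsupp.coe_neg, Finsupp.coe_smul,
    Pi.add_apply, Pi.sub_apply, Pi.neg_apply, Pi.smul_apply, Finsupp.single_apply,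
    smul_eq_mul]
  exact key i j k a

lemma Pmem (i j k : ZMod 8) : qmul 8 (qmul 8 (e 8 i) (e 8 j)) (e 8 k) ∈ Δ3 8 :=
  Submodule.subset_span ⟨qmul 8 (e 8 i) (e 8 j),
    Submodule.subset_span ⟨e 8 i, e_mem_Δ 8 i, e 8 j, e_mem_Δ 8 j, rfl⟩,
    e 8 k, e_mem_Δ 8 k, rfl⟩

lemma hv0 : v 0 = qmul 8 (qmul 8 (e 8 1) (e 8 1)) (e 8 2) := by
  rw [v0]
  simp only [P_expand]
  ext a
  simp only [e_eq, s8, Finsupp.coe_add, Finsupp.coe_sub, Finsupp.coe_neg, Finsupp.coe_smul,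
    Pi.add_apply, Pi.sub_apply, Pi.neg_apply, Pi.smul_apply, Finsupp.single_apply,
    smul_eq_mul]
  revert a; decide

lemma hv1 : v 1 = qmul 8 (qmul 8 (e 8 1) (e 8 1)) (e 8 3)
    - qmul 8 (qmul 8 (e 8 1) (e 8 1)) (e 8 2) := by
  rw [v1]
  simp only [P_expand]
  ext a
  simp only [e_eq, s8, Finsupp.coe_add, Finsupp.coe_sub, Finsupp.coe_neg, Finsupp.coe_smul,
    Pi.add_apply, Pi.sub_apply, Pi.neg_apply, Pi.smul_apply, Finsupp.single_apply,
    smul_eq_mul]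
  revert a; decide

lemma hv2 : v 2 = qmul 8 (qmul 8 (e 8 1) (e 8 1)) (e 8 3)
    - qmul 8 (qmul 8 (e 8 1) (e 8 1)) (e 8 2)
    - qmul 8 (qmul 8 (e 8 2) (e 8 1)) (e 8 3) := by
  rw [v2]
  simp only [P_expand]
  ext a
  simp only [e_eq, s8, Finsupp.coe_add, Finsupp.coe_sub, Finsupp.coe_neg, Finsupp.coe_smul,
    Pi.add_apply, Pi.sub_apply, Pi.neg_apply, Pi.smul_apply, Finsupp.single_apply,
    smul_eq_mul]
  revert a; decide

lemma hv3 : v 3 = -qmul 8 (qmul 8 (e 8 2) (e 8 1)) (e 8 2) := by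
  rw [v3]
  simp only [P_expand]
  ext a
  simp only [e_eq, s8, Finsupp.coe_add, Finsupp.coe_sub, Finsupp.coe_neg, Finsupp.coe_smul,
    Pi.add_apply, Pi.sub_apply, Pi.neg_apply, Pi.smul_apply, Finsupp.single_apply,
    smul_eq_mul]
  revert a; decide

lemma hv4 : v 4 = qmul 8 (qmul 8 (e 8 1) (e 8 1)) (e 8 1)
    + qmul 8 (qmul 8 (e 8 1) (e 8 1)) (e 8 2)
    - (3 : ℤ) • qmul 8 (qmul 8 (e 8 1) (e 8 1)) (e 8 3)
    - (2 : ℤ) • qmul 8 (qmul 8 (e 8 2) (e 8 1)) (e 8 2) := by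
  rw [v4]
  simp only [P_expand]
  ext a
  simp only [e_eq, s8, Finsupp.coe_add, Finsupp.coe_sub, Finsupp.coe_neg, Finsupp.coe_smul,
    Pi.add_apply, Pi.sub_apply, Pi.neg_apply, Pi.smul_apply, Finsupp.single_apply,
    smul_eq_mul]
  revert a; decide

lemma hv5 : v 5 = qmul 8 (qmul 8 (e 8 2) (e 8 1)) (e 8 2)
    - qmul 8 (qmul 8 (e 8 2) (e 8 1)) (e 8 1)
    + (3 : ℤ) • qmul 8 (qmul 8 (e 8 2) (e 8 1)) (e 8 3) := by
  rw [v5]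
  simp only [P_expand]
  ext a
  simp only [e_eq, s8, Finsupp.coe_add, Finsupp.coe_sub, Finsupp.coe_neg, Finsupp.coe_smul,
    Pi.add_apply, Pi.sub_apply, Pi.neg_apply, Pi.smul_apply, Finsupp.single_apply,
    smul_eq_mul]
  revert a; decide

lemma vmem (t : Fin 6) : v t ∈ Δ3 8 := by
  fin_cases t
  · rw [show (⟨0, by norm_num⟩ : Fin 6) = 0 from rfl, hv0]; exact Pmem _ _ _
  · rw [show (⟨1, by norm_num⟩ : Fin 6) = 1 from rfl, hv1]; exact sub_mem (Pmem _ _ _) (Pmem _ _ _)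
  · rw [show (⟨2, by norm_num⟩ : Fin 6) = 2 from rfl, hv2]
    exact sub_mem (sub_mem (Pmem _ _ _) (Pmem _ _ _)) (Pmem _ _ _)
  · rw [show (⟨3, by norm_num⟩ : Fin 6) = 3 from rfl, hv3]; exact neg_mem (Pmem _ _ _)
  · rw [show (⟨4, by norm_num⟩ : Fin 6) = 4 from rfl, hv4]
    exact sub_mem (sub_mem (add_mem (Pmem _ _ _) (Pmem _ _ _))
      (Submodule.smul_mem _ _ (Pmem _ _ _))) (Submodule.smul_mem _ _ (Pmem _ _ _))
  · rw [show (⟨5, by norm_num⟩ : Fin 6) = 5 from rfl, hv5]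
    exact add_mem (sub_mem (Pmem _ _ _) (Pmem _ _ _)) (Submodule.smul_mem _ _ (Pmem _ _ _))

lemma span_v : Δ3 8 = Submodule.span ℤ (Set.range v) := by
  apply le_antisymm
  · rw [Δ3_eq_span, Submodule.span_le]
    rintro _ ⟨_, ⟨_, ⟨i, rfl⟩, _, ⟨j, rfl⟩, rfl⟩, _, ⟨k, rfl⟩, rfl⟩
    simp only []
    rw [master i j k]
    exact Submodule.sum_mem _ fun t _ =>
      Submodule.smul_mem _ _ (Submodule.subset_span ⟨t, rfl⟩)
  · rw [Submodule.span_le]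
    rintro _ ⟨t, rfl⟩
    exact vmem t

lemma v_indep : LinearIndependent ℤ v := by
  rw [Fintype.linearIndependent_iff]
  intro g hg
  have h := fun (a : ZMod 8) => DFunLike.congr_fun hg a
  have h1 := h 1
  have h2 := h 2
  have h3 := h 3
  have h4 := h 4
  have h5 := h 5
  have h6 := h 6
  simp only [Fin.sum_univ_six, v0, v1, v2, v3, v4, v5, e_eq, s8, Finsupp.coe_add,
    Finsupp.coe_sub, Finsupp.coe_neg, Finsupp.coe_smul, Pi.add_apply, Pi.sub_apply,
    Pi.neg_apply, Pi.smul_apply, Finsupp.single_apply, smul_eq_mul, Finsupp.coe_zero,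
    Pi.zero_apply] at h1 h2 h3 h4 h5 h6
  simp (config := { decide := true }) at h1 h2 h3 h4 h5 h6
  intro t
  fin_cases t <;> simp <;> omega


/-- `Δ³(R_8)` has the given ℤ-basis. -/
theorem stmt_13 :
    ∃ b : Module.Basis (Fin 6) ℤ (Δ3 8),
      (b 0 : ZMod 8 →₀ ℤ) = e 8 1 - e 8 2 + e 8 3 + e 8 4 - e 8 5 + e 8 6 - e 8 7 ∧
      (b 1 : ZMod 8 →₀ ℤ) = e 8 2 - e 8 3 - (2 : ℤ) • e 8 4 + (2 : ℤ) • e 8 5 + e 8 6 - e 8 7 ∧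
      (b 2 : ZMod 8 →₀ ℤ) = -e 8 3 - e 8 4 + (2 : ℤ) • e 8 5 - (2 : ℤ) • e 8 6 - e 8 7 ∧
      (b 3 : ZMod 8 →₀ ℤ) = -(2 : ℤ) • e 8 4 ∧
      (b 4 : ZMod 8 →₀ ℤ) = -(4 : ℤ) • e 8 5 - (4 : ℤ) • e 8 6 + (4 : ℤ) • e 8 7 ∧
      (b 5 : ZMod 8 →₀ ℤ) = (8 : ℤ) • e 8 6 := by
  refine ⟨(Module.Basis.span v_indep).map (LinearEquiv.ofEq _ _ span_v.symm), ?_, ?_, ?_, ?_, ?_, ?_⟩ <;>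
    rw [Module.Basis.map_apply, LinearEquiv.coe_ofEq_apply, Module.Basis.span_apply] <;> rfl
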